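/- arXiv:math/0607810 — 3 statements merged into one kernel-verified Lean document; each statement's English description precedes it below -/
import Mathlib

section
/- Let S be a positive definite N×N Hermitian matrix in block form [[s, p],[p*, q]] with s of size k×k, and B = [[s^{-1},0],[0,0]]. Then the kernel of D = S^{-1} − B equals the image under S of the subspace E = C^k × {0} ⊂ C^N, i.e. Ker D = S(E). -/
open scoped ComplexOrder

open Matrix

namespace Matrix

variable {l m n R : Type*}

theorem PosDef.toBlocks₁₁ [Ring R] [PartialOrder R] [StarRing R]
    {S : Matrix (m ⊕ n) (m ⊕ n) R} (hS : S.PosDef) : S.toBlocks₁₁.PosDef :=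
  hS.submatrix Sum.inl_injective

theorem fromBlocks_inv_zero_mul_fromBlocks [Fintype l] [Fintype n] [DecidableEq l]
    [CommRing R] {A : Matrix l l R} (hA : IsUnit A.det) (B : Matrix l m R)
    (C : Matrix n l R) (D : Matrix n m R) :
    fromBlocks A⁻¹ (0 : Matrix l n R) 0 (0 : Matrix n n R) * fromBlocks A B C D
      = fromBlocks 1 (A⁻¹ * B) 0 0 := by
  simp [fromBlocks_multiply, nonsing_inv_mul _ hA]

theorem ker_mulVecLin_fromBlocks_zero_one [Fintype m] [Fintype n] [DecidableEq n]
    [CommRing R] (B : Matrix l n R) :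
    LinearMap.ker (fromBlocks (0 : Matrix l m R) B 0 (1 : Matrix n n R)).mulVecLin
      = LinearMap.ker (LinearMap.funLeft R R (Sum.inr : n → m ⊕ n)) := by
  ext y
  simp only [LinearMap.mem_ker, mulVecLin_apply, fromBlocks_mulVec, zero_mulVec, one_mulVec,
    zero_add]
  change _ ↔ y ∘ Sum.inr = 0
  constructor
  · intro h
    simpa using congrArg (· ∘ Sum.inr) h
  · intro h
    rw [h, mulVec_zero, Sum.elim_zero_zero]

theorem ker_mulVecLin_mul_inv [Fintype n] [DecidableEq n] [CommRing R]
    (A : Matrix l n R) {S : Matrix n n R} (hS : IsUnit S.det) :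
    LinearMap.ker (A * S⁻¹).mulVecLin
      = Submodule.map S.mulVecLin (LinearMap.ker A.mulVecLin) := by
  ext x
  simp only [LinearMap.mem_ker, mulVecLin_apply, Submodule.mem_map]
  constructor
  · intro hx
    refine ⟨S⁻¹ *ᵥ x, by rwa [mulVec_mulVec], ?_⟩
    rw [mulVec_mulVec, mul_nonsing_inv _ hS, one_mulVec]
  · rintro ⟨y, hy, rfl⟩
    rwa [mulVec_mulVec, Matrix.mul_assoc, nonsing_inv_mul _ hS, Matrix.mul_one]

end Matrix

/-- With `S` Hermitian positive definite in block form
`[[s, p], [p*, q]]` (`s` of size `k × k`) and `B = [[s⁻¹, 0], [0, 0]]`, the kernel of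
`D = S⁻¹ - B` equals the image under `S` of the subspace `E = ℂ^k × {0} ⊆ ℂ^N`. -/
theorem stmt1 {k m : ℕ}
    (S : Matrix (Fin k ⊕ Fin m) (Fin k ⊕ Fin m) ℂ) (hS : S.PosDef)
    (B : Matrix (Fin k ⊕ Fin m) (Fin k ⊕ Fin m) ℂ)
    (hB : B = Matrix.fromBlocks (S.toBlocks₁₁)⁻¹ 0 0 0) :
    LinearMap.ker (S⁻¹ - B).mulVecLin
      = Submodule.map S.mulVecLin
          (LinearMap.ker (LinearMap.funLeft ℂ ℂ (Sum.inr : Fin m → Fin k ⊕ Fin m))) := by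
  have hdetS : IsUnit S.det := (isUnit_iff_isUnit_det S).mp hS.isUnit
  have hdet₁₁ : IsUnit S.toBlocks₁₁.det :=
    (isUnit_iff_isUnit_det _).mp hS.toBlocks₁₁.isUnit
  set C := S.toBlocks₁₁⁻¹ * S.toBlocks₁₂
  -- `S⁻¹ - B = (1 - B S) S⁻¹` with `1 - B S = [[0, -s⁻¹p], [0, 1]]`, whose kernel is `E`.
  have hfactor : S⁻¹ - B = fromBlocks 0 (-C) 0 1 * S⁻¹ := by
    have hBS : B * S = fromBlocks 1 C 0 0 := by
      rw [hB, ← fromBlocks_inv_zero_mul_fromBlocks hdet₁₁, fromBlocks_toBlocks]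
    have hcompl : fromBlocks 0 (-C) 0 1 = 1 - B * S := by
      rw [hBS, ← fromBlocks_one, sub_eq_add_neg, fromBlocks_neg, fromBlocks_add]
      simp
    rw [hcompl, sub_mul, Matrix.one_mul, Matrix.mul_assoc, mul_nonsing_inv _ hdetS,
      Matrix.mul_one]
  rw [hfactor, ker_mulVecLin_mul_inv _ hdetS, ker_mulVecLin_fromBlocks_zero_one]
end

section
/- Let V = V* ∈ L¹(0,1), λ_α an eigenvalue, φ_α(x) = φ(x,λ_α), S_α(x) = ∫₀^x φ_α*φ_α dt, B_α and B Hermitian positive semidefinite with the kernel complements E_α and E^(B) of dimension k_α, A = B − B_α. If (C^N ⊖ Ker(S_α(1)^{-1} − B_α)) ∩ E^(B) = {0} and S_α(1)^{-1} − B_α ≥ 0, then det(I + S_α(x) A) ≠ 0 for all x ∈ [0,1]. -/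
/-!
Since `S(x) = ∫₀ˣ φ*φ` is monotone, `0 ≤ S(x) ≤ S(1)`, and the Schur complement of the positive
block matrix `[[S(1), S(x)], [S(x), S(x)]]` gives `S(x) S(1)⁻¹ S(x) ≤ S(x)`. If
`(1 + S(x) A) v = 0`, then `u = S(x) A v = -v` satisfies `u* (S(1)⁻¹ + A) u ≤ 0`.
But `S(1)⁻¹ + A = D + B` is positive definite: `Ker D ∩ Ker B = 0` because
`rank D + rank B = rank D + rank B_α ≥ N` (as `D + B_α = S(1)⁻¹` is invertible) while
`(Ker D)ᗮ ∩ (Ker B)ᗮ = 0`.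
-/

open Matrix
open scoped ComplexOrder

open Module in
theorem Submodule.inf_eq_bot_of_orthogonal_inf_eq_bot {𝕜 E : Type*} [RCLike 𝕜]
    [NormedAddCommGroup E] [InnerProductSpace 𝕜 E] [FiniteDimensional 𝕜 E]
    {K L M : Submodule 𝕜 E} (hKL : K ⊓ L = ⊥) (hLM : finrank 𝕜 Lᗮ = finrank 𝕜 Mᗮ)
    (hKM : Kᗮ ⊓ Mᗮ = ⊥) : K ⊓ M = ⊥ := by
  have hsup : K ⊔ M = ⊤ := by
    rw [← Submodule.orthogonal_eq_bot_iff, ← Submodule.inf_orthogonal, hKM]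
  have hL := L.finrank_add_finrank_orthogonal
  have hM := M.finrank_add_finrank_orthogonal
  have hKL' := K.finrank_sup_add_finrank_inf_eq L
  have hKM' := K.finrank_sup_add_finrank_inf_eq M
  rw [hKL, finrank_bot] at hKL'
  rw [hsup, finrank_top] at hKM'
  have := (K ⊔ L).finrank_le
  exact Submodule.finrank_eq_zero.mp (by omega)

namespace Matrix

variable {n 𝕜 : Type*} [Fintype n] [RCLike 𝕜]

open MeasureTheory intervalIntegral in
theorem posSemidef_of_apply_eq_intervalIntegral {G : ℝ → Matrix n n 𝕜} {a b : ℝ} (hab : a ≤ b)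
    (hG : ∀ i j, IntervalIntegrable (fun t => G t i j) volume a b)
    (hGpsd : ∀ t ∈ Set.Icc a b, (G t).PosSemidef) {M : Matrix n n 𝕜}
    (hM : ∀ i j, M i j = ∫ t in a..b, G t i j) : M.PosSemidef := by
  have hquad : ∀ v : n → 𝕜, star v ⬝ᵥ M *ᵥ v = ∫ t in a..b, star v ⬝ᵥ G t *ᵥ v := by
    intro v
    simp only [dotProduct, mulVec, hM, Finset.mul_sum]
    rw [intervalIntegral.integral_finsetSum fun i _ => ?_]
    · refine Finset.sum_congr rfl fun i _ => ?_
      rw [intervalIntegral.integral_finsetSum fun j _ => ?_]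
      · exact Finset.sum_congr rfl fun j _ => by
          rw [← intervalIntegral.integral_mul_const, ← intervalIntegral.integral_const_mul]
      · exact ((hG i j).mul_const _).const_mul _
    · simpa only [Finset.sum_fn] using
        IntervalIntegrable.sum _ fun j _ => ((hG i j).mul_const (v j)).const_mul (star v i)
  refine PosSemidef.of_dotProduct_mulVec_nonneg ?_ fun v => ?_
  · ext i j
    rw [conjTranspose_apply, hM, hM, RCLike.star_def, ← intervalIntegral_conj]
    exact integral_congr fun t ht => (hGpsd t (Set.uIcc_of_le hab ▸ ht)).1.apply i j
  · rw [hquad, integral_of_le hab]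
    exact integral_nonneg_of_ae <| ae_restrict_of_forall_mem measurableSet_Ioc fun t ht =>
      (hGpsd t (Set.Ioc_subset_Icc_self ht)).dotProduct_mulVec_nonneg v

variable [DecidableEq n]

/-- `[[T, S], [S, S]] = [[T - S, 0], [0, 0]] + [[S, S], [S, S]] ≥ 0`, and `S - S T⁻¹ S` is its
Schur complement. -/
theorem PosDef.posSemidef_sub_mul_inv_mul {S T : Matrix n n 𝕜} (hT : T.PosDef)
    (hS : S.PosSemidef) (hST : (T - S).PosSemidef) : (S - S * T⁻¹ * S).PosSemidef := by
  have : Invertible T := hT.isUnit.invertible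
  let I : Matrix n (n ⊕ n) 𝕜 := fromCols 1 1
  let P : Matrix n (n ⊕ n) 𝕜 := fromCols 1 0
  have hblock : fromBlocks T S Sᴴ S = Pᴴ * (T - S) * P + Iᴴ * S * I := by
    simp only [hS.1.eq, I, P, Matrix.mul_assoc, conjTranspose_fromCols_eq_fromRows_conjTranspose,
      mul_fromCols]
    ext (i | i) (j | j) <;> simp
  have hpsd : (fromBlocks T S Sᴴ S).PosSemidef := by
    rw [hblock]
    exact (hST.conjTranspose_mul_mul_same P).add (hS.conjTranspose_mul_mul_same I)
  simpa [hS.1.eq] using (PosDef.fromBlocks₁₁ S S hT).mp hpsd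

theorem det_one_add_mul_ne_zero {S T A : Matrix n n 𝕜} (hS : S.PosSemidef) (hT : T.PosDef)
    (hST : (T - S).PosSemidef) (hA : A.IsHermitian) (hTA : (T⁻¹ + A).PosDef) :
    (1 + S * A).det ≠ 0 := by
  intro hdet
  obtain ⟨v, hv, hSAv⟩ := exists_mulVec_eq_zero_iff.mpr hdet
  set u := S *ᵥ (A *ᵥ v) with hu
  have hvu : v = -u := by
    rw [add_mulVec, one_mulVec, ← mulVec_mulVec] at hSAv
    exact eq_neg_of_add_eq_zero_left hSAv
  have hSchur := (hT.posSemidef_sub_mul_inv_mul hS hST).dotProduct_mulVec_nonneg (A *ᵥ v)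
  have hquad : star (A *ᵥ v) ⬝ᵥ (S * T⁻¹ * S) *ᵥ (A *ᵥ v) = star u ⬝ᵥ T⁻¹ *ᵥ u := by
    have hstar : star (A *ᵥ v) ᵥ* S = star u := by rw [hu, star_mulVec S, hS.1.eq]
    rw [← mulVec_mulVec, ← mulVec_mulVec, dotProduct_mulVec, hstar]
  have hcross : star (A *ᵥ v) ⬝ᵥ S *ᵥ (A *ᵥ v) = -(star u ⬝ᵥ A *ᵥ u) := by
    rw [← hu, star_mulVec, ← dotProduct_mulVec, hA.eq, hvu, star_neg, neg_dotProduct]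
  have hnonpos : star u ⬝ᵥ (T⁻¹ + A) *ᵥ u ≤ 0 := by
    rw [sub_mulVec, dotProduct_sub, hquad, hcross, sub_nonneg] at hSchur
    rw [add_mulVec, dotProduct_add]
    linear_combination hSchur
  have hu0 : u = 0 := by
    by_contra hu0
    exact (hTA.dotProduct_mulVec_pos hu0).not_ge hnonpos
  exact hv (by rw [hvu, hu0, neg_zero])

theorem PosSemidef.posDef_add {A B : Matrix n n 𝕜} (hA : A.PosSemidef) (hB : B.PosSemidef)
    (hAB : LinearMap.ker (toEuclideanLin A) ⊓ LinearMap.ker (toEuclideanLin B) = ⊥) :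
    (A + B).PosDef := by
  refine PosDef.of_dotProduct_mulVec_pos (hA.1.add hB.1) fun v hv => ?_
  rw [add_mulVec, dotProduct_add]
  have hAv := hA.dotProduct_mulVec_nonneg v
  have hBv := hB.dotProduct_mulVec_nonneg v
  refine (add_nonneg hAv hBv).lt_of_ne fun h => hv ?_
  obtain ⟨hAv0, hBv0⟩ := (add_eq_zero_iff_of_nonneg hAv hBv).mp h.symm
  have hmem : WithLp.toLp 2 v ∈
      LinearMap.ker (toEuclideanLin A) ⊓ LinearMap.ker (toEuclideanLin B) :=
    ⟨by simp [(hA.dotProduct_mulVec_zero_iff v).mp hAv0],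
      by simp [(hB.dotProduct_mulVec_zero_iff v).mp hBv0]⟩
  rw [hAB] at hmem
  simpa using hmem

theorem ker_toEuclideanLin_inf_eq_bot_of_isUnit_add {A B : Matrix n n 𝕜} (h : IsUnit (A + B)) :
    LinearMap.ker (toEuclideanLin A) ⊓ LinearMap.ker (toEuclideanLin B) = ⊥ := by
  refine eq_bot_iff.mpr fun v ⟨hA, hB⟩ => ?_
  simp only [SetLike.mem_coe, LinearMap.mem_ker, toLpLin_apply, WithLp.toLp_eq_zero] at hA hB
  have : (A + B) *ᵥ v.ofLp = (A + B) *ᵥ 0 := by rw [add_mulVec, hA, hB, mulVec_zero, add_zero]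
  simpa using mulVec_injective_of_isUnit h this

end Matrix

theorem stmt13_general {N : ℕ}
    (φα φαd : ℝ → Matrix (Fin N) (Fin N) ℂ)
    (hde1 : ∀ (x : ℝ) (i j : Fin N), HasDerivAt (fun t => φα t i j) (φαd x i j) x)
    (Sx : ℝ → Matrix (Fin N) (Fin N) ℂ)
    (hSx : ∀ (x : ℝ) (i j : Fin N), Sx x i j = ∫ t in (0:ℝ)..x, ((φα t)ᴴ * φα t) i j)
    (hS1 : (Sx 1).PosDef)
    (Bα B : Matrix (Fin N) (Fin N) ℂ)
    (hBα : Bα.PosSemidef) (hB : B.PosSemidef)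
    (hBαdim : Module.finrank ℂ (LinearMap.ker (Matrix.toEuclideanLin Bα))ᗮ
      = Module.finrank ℂ (LinearMap.ker (φα 1).mulVecLin))
    (hBdim : Module.finrank ℂ (LinearMap.ker (Matrix.toEuclideanLin B))ᗮ
      = Module.finrank ℂ (LinearMap.ker (φα 1).mulVecLin))
    (hD : ((Sx 1)⁻¹ - Bα).PosSemidef)
    (hcap : (LinearMap.ker (Matrix.toEuclideanLin ((Sx 1)⁻¹ - Bα)))ᗮ
      ⊓ (LinearMap.ker (Matrix.toEuclideanLin B))ᗮ = ⊥) :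
    ∀ x ∈ Set.Icc (0:ℝ) 1, (1 + Sx x * (B - Bα)).det ≠ 0 := by
  intro x hx
  have hφ : Continuous φα := continuous_pi fun i => continuous_pi fun j =>
    continuous_iff_continuousAt.mpr fun t => (hde1 t i j).continuousAt
  have hG (i j : Fin N) (a b : ℝ) :
      IntervalIntegrable (fun t => ((φα t)ᴴ * φα t) i j) MeasureTheory.volume a b :=
    ((hφ.matrix_conjTranspose.matrix_mul hφ).matrix_elem i j).intervalIntegrable a b
  have hGpsd (t : ℝ) : ((φα t)ᴴ * φα t).PosSemidef := posSemidef_conjTranspose_mul_self _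
  have hSx_psd : (Sx x).PosSemidef :=
    posSemidef_of_apply_eq_intervalIntegral hx.1 (fun i j => hG i j 0 x)
      (fun t _ => hGpsd t) (hSx x)
  have hSx_le : (Sx 1 - Sx x).PosSemidef :=
    posSemidef_of_apply_eq_intervalIntegral hx.2 (fun i j => hG i j x 1)
      (fun t _ => hGpsd t) fun i j => by
        rw [Matrix.sub_apply, hSx, hSx,
          intervalIntegral.integral_interval_sub_left (hG i j 0 1) (hG i j 0 x)]
  have hker_Bα :
      LinearMap.ker (toEuclideanLin ((Sx 1)⁻¹ - Bα)) ⊓ LinearMap.ker (toEuclideanLin Bα) = ⊥ :=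
    ker_toEuclideanLin_inf_eq_bot_of_isUnit_add <| by
      rw [sub_add_cancel]; exact isUnit_nonsing_inv_iff.mpr hS1.isUnit
  have hker_B :=
    Submodule.inf_eq_bot_of_orthogonal_inf_eq_bot hker_Bα (hBαdim.trans hBdim.symm) hcap
  refine det_one_add_mul_ne_zero hSx_psd hS1 hSx_le (hB.1.sub hBα.1) ?_
  rw [show (Sx 1)⁻¹ + (B - Bα) = (Sx 1)⁻¹ - Bα + B by abel]
  exact hD.posDef_add hB hker_B

/-- Let `λ_α` be a Dirichlet eigenvalue, `φ_α = φ(·,λ_α)`,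
`S_α(x) = ∫₀ˣ φ_α*φ_α dt`, and let `B_α`, `B` be Hermitian positive semidefinite
matrices whose kernel complements `E_α = (Ker B_α)ᗮ` and `E^(B) = (Ker B)ᗮ` have
dimension `k_α = dim Ker φ_α(1)`, and set `A = B - B_α`.  If
`D_α = S_α(1)⁻¹ - B_α ≥ 0` and `(Ker D_α)ᗮ ∩ E^(B) = {0}`, then
`det (I + S_α(x) A) ≠ 0` for all `x ∈ [0,1]`. -/
theorem stmt13 {N : ℕ}
    (V : ℝ → Matrix (Fin N) (Fin N) ℂ) (hV : ∀ x, (V x).IsHermitian)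
    (lam : ℝ)
    (φα φαd : ℝ → Matrix (Fin N) (Fin N) ℂ)
    (hφ0 : φα 0 = 0) (hφd0 : φαd 0 = 1)
    (hde1 : ∀ (x : ℝ) (i j : Fin N), HasDerivAt (fun t => φα t i j) (φαd x i j) x)
    (hde2 : ∀ (x : ℝ) (i j : Fin N),
      HasDerivAt (fun t => φαd t i j) ((V x * φα x - (lam : ℂ) • φα x) i j) x)
    (heig : LinearMap.ker (φα 1).mulVecLin ≠ ⊥)
    (Sx : ℝ → Matrix (Fin N) (Fin N) ℂ)
    (hSx : ∀ (x : ℝ) (i j : Fin N), Sx x i j = ∫ t in (0:ℝ)..x, ((φα t)ᴴ * φα t) i j)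
    (hS1 : (Sx 1).PosDef)
    (Bα B : Matrix (Fin N) (Fin N) ℂ)
    (hBα : Bα.PosSemidef) (hB : B.PosSemidef)
    (hBαdim : Module.finrank ℂ (LinearMap.ker (Matrix.toEuclideanLin Bα))ᗮ
      = Module.finrank ℂ (LinearMap.ker (φα 1).mulVecLin))
    (hBdim : Module.finrank ℂ (LinearMap.ker (Matrix.toEuclideanLin B))ᗮ
      = Module.finrank ℂ (LinearMap.ker (φα 1).mulVecLin))
    (hD : ((Sx 1)⁻¹ - Bα).PosSemidef)
    (hcap : (LinearMap.ker (Matrix.toEuclideanLin ((Sx 1)⁻¹ - Bα)))ᗮ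
      ⊓ (LinearMap.ker (Matrix.toEuclideanLin B))ᗮ = ⊥) :
    ∀ x ∈ Set.Icc (0:ℝ) 1, (1 + Sx x * (B - Bα)).det ≠ 0 :=
  stmt13_general φα φαd hde1 Sx hSx hS1 Bα B hBα hB hBαdim hBdim hD hcap
end

section
/- Darboux-type transform: let V = V* ∈ L¹(0,1), λ_α an eigenvalue, φ_α = φ(·,λ_α), S_α(x) = ∫₀^x φ_α*φ_α dt, A = A* a constant matrix with det(I + S_α(x)A) ≠ 0 for all x ∈ [0,1], K(x) = A(I + S_α(x)A)^{-1}, and Ṽ = V − 2(φ_α K φ_α*)'. Then for every λ the function η(x,λ) = φ(x,λ) − φ_α(x) K(x) ∫₀^x φ_α*(t) φ(t,λ) dt satisfies −η'' + Ṽη = λη with η(0,λ)=0, η'(0,λ)=I; i.e. η(·,λ) = φ(·,λ,Ṽ). -/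
/-!
Write `a = φ_α`, `b = φ(·,λ)` and `W = a K a*`. Since `S_α' = a*a`, the derivative of the inverse
gives `K' = -K a*a K`, and with `T' = a*b` this collapses the first derivative to
`η' = b' - a'KT - Wη`. Differentiating once more, all terms except `-2W'η` cancel thanks to the
Lagrange identity `(a')*b - a*b' = (λ - λ_α) T`, whose case `λ = λ_α` is the symmetry
`(a')*a = a*a'`: its left side vanishes at `0` and has derivative `(λ - λ_α) a*b`, which is where
`V = V*` and `λ_α ∈ ℝ` enter.
-/

open Matrix

section MatrixCalculus

-- Any norm would do: it only makes the product and inverse rules available, and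
-- `Matrix.hasDerivAt_iff_forall_entry` ties its derivatives to the entrywise ones.
open scoped Matrix.Norms.Operator

variable {m n 𝕜 : Type*} [Fintype m] [Fintype n] [RCLike 𝕜] {x : ℝ}

theorem Matrix.hasDerivAt_iff_forall_entry {F : ℝ → Matrix m n 𝕜} {F' : Matrix m n 𝕜} :
    HasDerivAt F F' x ↔ ∀ i j, HasDerivAt (fun t => F t i j) (F' i j) x := by
  let e : Matrix m n 𝕜 ≃L[ℝ] (m → n → 𝕜) := (ofLinearEquiv ℝ).symm.toContinuousLinearEquiv
  refine (e.comp_hasFDerivAt_iff (f := F) (x := x)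
    (f' := ContinuousLinearMap.toSpanSingleton ℝ F')).symm.trans ?_
  exact (hasDerivAt_iff_hasFDerivAt (f := e ∘ F) (f' := e F')).symm.trans
    (hasDerivAt_pi.trans (forall_congr' fun _ => hasDerivAt_pi))

theorem HasDerivAt.matrix_conjTranspose {F : ℝ → Matrix m n 𝕜} {F' : Matrix m n 𝕜}
    (hF : HasDerivAt F F' x) : HasDerivAt (fun t => (F t)ᴴ) F'ᴴ x :=
  hasDerivAt_iff_forall_entry.mpr fun i j => (hasDerivAt_iff_forall_entry.mp hF j i).star

theorem hasDerivAt_of_forall_entry_eq_integral {F G : ℝ → Matrix m n 𝕜} (hG : Continuous G)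
    (hF : ∀ x i j, F x i j = ∫ t in (0:ℝ)..x, G t i j) (x : ℝ) : HasDerivAt F (G x) x := by
  refine hasDerivAt_iff_forall_entry.mpr fun i j => ?_
  have hGij : Continuous fun t => G t i j := hG.matrix_elem i j
  rw [show (fun t => F t i j) = fun x => ∫ t in (0:ℝ)..x, G t i j from funext fun x => hF x i j]
  exact intervalIntegral.integral_hasDerivAt_right (hGij.intervalIntegrable _ _)
    (hGij.stronglyMeasurableAtFilter _ _) hGij.continuousAt

variable [DecidableEq n]

theorem HasDerivAt.matrix_inv {F : ℝ → Matrix n n 𝕜} {F' : Matrix n n 𝕜}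
    (hF : HasDerivAt F F' x) (hdet : (F x).det ≠ 0) :
    HasDerivAt (fun t => (F t)⁻¹) (-((F x)⁻¹ * F' * (F x)⁻¹)) x := by
  have hunit : IsUnit (F x) := (isUnit_iff_isUnit_det _).mpr hdet.isUnit
  have h := (hasFDerivAt_ringInverse (𝕜 := ℝ) hunit.unit).comp_hasDerivAt x hF
  rw [show Ring.inverse ∘ F = fun t => (F t)⁻¹ from
    funext fun t => (nonsing_inv_eq_ringInverse _).symm] at h
  exact h.congr_deriv (by simp [Matrix.mul_assoc])

theorem hasDerivAt_mul_inv_one_add_mul {S : ℝ → Matrix n n 𝕜} {P A : Matrix n n 𝕜}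
    (hS : HasDerivAt S P x) (hdet : (1 + S x * A).det ≠ 0) :
    HasDerivAt (fun t => A * (1 + S t * A)⁻¹)
      (-(A * (1 + S x * A)⁻¹ * P * (A * (1 + S x * A)⁻¹))) x :=
  (((hS.mul_const A).const_add 1).matrix_inv hdet).const_mul A |>.congr_deriv
    (by simp [Matrix.mul_assoc])

end MatrixCalculus

section Darboux

open scoped Matrix.Norms.Operator

variable {n 𝕜 : Type*} [Fintype n] [RCLike 𝕜]

def IsSchrodingerSolution (V : ℝ → Matrix n n 𝕜) (l : 𝕜) (y y' : ℝ → Matrix n n 𝕜) : Prop :=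
  ∀ x, HasDerivAt y (y' x) x ∧ HasDerivAt y' (V x * y x - l • y x) x

theorem IsSchrodingerSolution.continuous {V : ℝ → Matrix n n 𝕜} {l : 𝕜} {y y' : ℝ → Matrix n n 𝕜}
    (h : IsSchrodingerSolution V l y y') : Continuous y :=
  continuous_iff_continuousAt.mpr fun x => (h x).1.continuousAt

variable [DecidableEq n]

theorem IsSchrodingerSolution.wronskian_eq_smul {V : ℝ → Matrix n n 𝕜}
    (hV : ∀ x, (V x).IsHermitian) {μ : ℝ} {l : 𝕜} {u u' v v' T : ℝ → Matrix n n 𝕜}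
    (hu : IsSchrodingerSolution V μ u u') (hv : IsSchrodingerSolution V l v v')
    (hu0 : u 0 = 0) (hv0 : v 0 = 0)
    (hT : ∀ x, HasDerivAt T ((u x)ᴴ * v x) x) (hT0 : T 0 = 0) (x : ℝ) :
    (u' x)ᴴ * v x - (u x)ᴴ * v' x = (l - μ) • T x := by
  set D : ℝ → Matrix n n 𝕜 := fun t => (u' t)ᴴ * v t - (u t)ᴴ * v' t - (l - μ) • T t
  have hD : ∀ t, HasDerivAt D 0 t := fun t => by
    refine ((((hu t).2.matrix_conjTranspose.mul (hv t).1).sub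
      ((hu t).1.matrix_conjTranspose.mul (hv t).2)).sub ((hT t).const_smul (l - μ))).congr_deriv ?_
    rw [conjTranspose_sub, conjTranspose_mul, conjTranspose_smul, (hV t).eq, RCLike.star_def,
      RCLike.conj_ofReal]
    simp only [Matrix.sub_mul, Matrix.mul_sub, smul_mul_assoc, mul_smul_comm, Matrix.mul_assoc,
      sub_smul]
    abel
  have hconst := is_const_of_deriv_eq_zero (fun t => (hD t).differentiableAt)
    (fun t => (hD t).deriv) x 0
  simpa [D, hu0, hv0, hT0, sub_eq_zero] using hconst

theorem hasDerivAt_darbouxTransform {a b K T : ℝ → Matrix n n 𝕜} {a' b' : Matrix n n 𝕜} {x : ℝ}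
    (ha : HasDerivAt a a' x) (hb : HasDerivAt b b' x)
    (hK : HasDerivAt K (-(K x * ((a x)ᴴ * a x) * K x)) x)
    (hT : HasDerivAt T ((a x)ᴴ * b x) x) :
    HasDerivAt (fun t => b t - a t * K t * T t)
      (b' - a' * K x * T x - a x * K x * (a x)ᴴ * (b x - a x * K x * T x)) x :=
  (hb.sub ((ha.mul hK).mul hT)).congr_deriv (by
    simp only [Pi.mul_apply, Matrix.add_mul, Matrix.mul_sub, Matrix.neg_mul, Matrix.mul_neg,
      Matrix.mul_assoc]
    abel)

theorem hasDerivAt_darbouxTransform_deriv {V : ℝ → Matrix n n 𝕜} {μ l : 𝕜}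
    {a a' b b' K T : ℝ → Matrix n n 𝕜} {W' : Matrix n n 𝕜} {x : ℝ}
    (ha : HasDerivAt a (a' x) x) (ha' : HasDerivAt a' (V x * a x - μ • a x) x)
    (hb : HasDerivAt b (b' x) x) (hb' : HasDerivAt b' (V x * b x - l • b x) x)
    (hK : HasDerivAt K (-(K x * ((a x)ᴴ * a x) * K x)) x)
    (hT : HasDerivAt T ((a x)ᴴ * b x) x)
    (hW : HasDerivAt (fun t => a t * K t * (a t)ᴴ) W' x)
    (hab : (a' x)ᴴ * b x - (a x)ᴴ * b' x = (l - μ) • T x)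
    (haa : (a' x)ᴴ * a x = (a x)ᴴ * a' x) :
    HasDerivAt (fun t => b' t - a' t * K t * T t - a t * K t * (a t)ᴴ * (b t - a t * K t * T t))
      ((V x - 2 • W') * (b x - a x * K x * T x) - l • (b x - a x * K x * T x)) x := by
  have hW' : W' = a' x * K x * (a x)ᴴ - a x * (K x * ((a x)ᴴ * a x) * K x) * (a x)ᴴ
      + a x * K x * (a' x)ᴴ :=
    hW.unique (((ha.mul hK).mul ha.matrix_conjTranspose).congr_deriv (by
      simp only [Pi.mul_apply, Matrix.add_mul, Matrix.mul_neg, Matrix.neg_mul]; abel))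
  refine ((hb'.sub ((ha'.mul hK).mul hT)).sub
    (hW.mul (hasDerivAt_darbouxTransform ha hb hK hT))).congr_deriv ?_
  rw [← sub_eq_zero]
  calc _ = a x * K x * ((a' x)ᴴ * b x - (a x)ᴴ * b' x - (l - μ) • T x)
        - a x * K x * ((a' x)ᴴ * a x - (a x)ᴴ * a' x) * K x * T x := by
        rw [hW']
        simp only [Pi.mul_apply, Matrix.sub_mul, Matrix.mul_sub, Matrix.add_mul,
          Matrix.neg_mul, Matrix.mul_neg, smul_mul_assoc, mul_smul_comm, sub_smul, smul_sub,
          two_smul, Matrix.mul_assoc]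
        abel
    _ = 0 := by rw [hab, haa]; simp

end Darboux

theorem stmt14_general {N : ℕ}
    (V : ℝ → Matrix (Fin N) (Fin N) ℂ) (hV : ∀ x, (V x).IsHermitian)
    (φ φd : ℂ → ℝ → Matrix (Fin N) (Fin N) ℂ)
    (hφ0 : ∀ l, φ l 0 = 0) (hφd0 : ∀ l, φd l 0 = 1)
    (hde1 : ∀ (l : ℂ) (x : ℝ) (i j : Fin N),
      HasDerivAt (fun t => φ l t i j) (φd l x i j) x)
    (hde2 : ∀ (l : ℂ) (x : ℝ) (i j : Fin N),
      HasDerivAt (fun t => φd l t i j) ((V x * φ l x - l • φ l x) i j) x)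
    (lam : ℝ)
    (Sx : ℝ → Matrix (Fin N) (Fin N) ℂ)
    (hSx : ∀ (x : ℝ) (i j : Fin N),
      Sx x i j = ∫ t in (0:ℝ)..x, ((φ (lam : ℂ) t)ᴴ * φ (lam : ℂ) t) i j)
    (A : Matrix (Fin N) (Fin N) ℂ)
    (hdet : ∀ x ∈ Set.Icc (0:ℝ) 1, (1 + Sx x * A).det ≠ 0)
    (K : ℝ → Matrix (Fin N) (Fin N) ℂ)
    (hK : ∀ x, K x = A * (1 + Sx x * A)⁻¹)
    (W Wd : ℝ → Matrix (Fin N) (Fin N) ℂ)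
    (hW : ∀ x, W x = φ (lam : ℂ) x * K x * (φ (lam : ℂ) x)ᴴ)
    (hWd : ∀ x ∈ Set.Icc (0:ℝ) 1, ∀ i j : Fin N,
      HasDerivAt (fun t => W t i j) (Wd x i j) x)
    (Vt : ℝ → Matrix (Fin N) (Fin N) ℂ)
    (hVt : ∀ x, Vt x = V x - 2 • Wd x)
    (T : ℝ → ℂ → Matrix (Fin N) (Fin N) ℂ)
    (hT : ∀ (x : ℝ) (l : ℂ) (i j : Fin N),
      T x l i j = ∫ t in (0:ℝ)..x, ((φ (lam : ℂ) t)ᴴ * φ l t) i j)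
    (η : ℂ → ℝ → Matrix (Fin N) (Fin N) ℂ)
    (hη : ∀ (l : ℂ) (x : ℝ), η l x = φ l x - φ (lam : ℂ) x * K x * T x l) :
    ∀ l : ℂ, η l 0 = 0 ∧
      ∃ ηd : ℝ → Matrix (Fin N) (Fin N) ℂ, ηd 0 = 1 ∧
        (∀ x ∈ Set.Icc (0:ℝ) 1, ∀ i j : Fin N,
          HasDerivAt (fun t => η l t i j) (ηd x i j) x) ∧
        (∀ x ∈ Set.Icc (0:ℝ) 1, ∀ i j : Fin N,
          HasDerivAt (fun t => ηd t i j) ((Vt x * η l x - l • η l x) i j) x) := by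
  intro l
  have hsol : ∀ m, IsSchrodingerSolution V m (φ m) (φd m) := fun m x =>
    ⟨hasDerivAt_iff_forall_entry.mpr (hde1 m x), hasDerivAt_iff_forall_entry.mpr (hde2 m x)⟩
  have hcont : ∀ m, Continuous fun t => (φ lam t)ᴴ * φ m t := fun m =>
    (hsol lam).continuous.matrix_conjTranspose.matrix_mul (hsol m).continuous
  have hS' := hasDerivAt_of_forall_entry_eq_integral (hcont lam) hSx
  have hT' := hasDerivAt_of_forall_entry_eq_integral (hcont l) fun x => hT x l
  have hS0 : Sx 0 = 0 := by ext i j; simp [hSx]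
  have hT0 : T 0 l = 0 := by ext i j; simp [hT]
  have hK' : ∀ x ∈ Set.Icc (0:ℝ) 1, HasDerivAt K (-(K x * ((φ lam x)ᴴ * φ lam x) * K x)) x := by
    intro x hx
    rw [funext hK]
    exact hasDerivAt_mul_inv_one_add_mul (hS' x) (hdet x hx)
  have hsym : ∀ x, (φd lam x)ᴴ * φ lam x = (φ lam x)ᴴ * φd lam x := fun x => by
    simpa [sub_eq_zero] using
      (hsol lam).wronskian_eq_smul hV (hsol lam) (hφ0 _) (hφ0 _) hS' hS0 x
  have hwr := (hsol lam).wronskian_eq_smul hV (hsol l) (hφ0 _) (hφ0 _) hT' hT0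
  rw [funext (hη l)]
  refine ⟨by simp [hφ0], fun t => φd l t - φd lam t * K t * T t l
    - φ lam t * K t * (φ lam t)ᴴ * (φ l t - φ lam t * K t * T t l),
    by simp [hφ0, hφd0, hT0], fun x hx => ?_, fun x hx => ?_⟩
  · exact hasDerivAt_iff_forall_entry.mp <|
      hasDerivAt_darbouxTransform (hsol lam x).1 (hsol l x).1 (hK' x hx) (hT' x)
  · have hWx : HasDerivAt (fun t => φ lam t * K t * (φ lam t)ᴴ) (Wd x) x :=
      funext hW ▸ hasDerivAt_iff_forall_entry.mpr (hWd x hx)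
    rw [hVt]
    exact hasDerivAt_iff_forall_entry.mp <| hasDerivAt_darbouxTransform_deriv (hsol lam x).1
      (hsol lam x).2 (hsol l x).1 (hsol l x).2 (hK' x hx) (hT' x) hWx (hwr x) (hsym x)

/-- **Darboux-type transform.** Let `V = V*`, `λ_α` a real
eigenvalue parameter, `φ_α = φ(·,λ_α)`, `S_α(x) = ∫₀ˣ φ_α*φ_α dt`, `A = A*` a
constant matrix with `det (I + S_α(x) A) ≠ 0` on `[0,1]`,
`K(x) = A (I + S_α(x) A)⁻¹`, and `Ṽ = V - 2 (φ_α K φ_α*)'`.  Then for every `λ`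
the function `η(x,λ) = φ(x,λ) - φ_α(x) K(x) ∫₀ˣ φ_α* φ(·,λ) dt` satisfies
`-η'' + Ṽη = λη` with `η(0,λ) = 0`, `η'(0,λ) = I`; i.e. `η(·,λ) = φ(·,λ,Ṽ)`. -/
theorem stmt14 {N : ℕ}
    (V : ℝ → Matrix (Fin N) (Fin N) ℂ) (hV : ∀ x, (V x).IsHermitian)
    (φ φd : ℂ → ℝ → Matrix (Fin N) (Fin N) ℂ)
    (hφ0 : ∀ l, φ l 0 = 0) (hφd0 : ∀ l, φd l 0 = 1)
    (hde1 : ∀ (l : ℂ) (x : ℝ) (i j : Fin N),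
      HasDerivAt (fun t => φ l t i j) (φd l x i j) x)
    (hde2 : ∀ (l : ℂ) (x : ℝ) (i j : Fin N),
      HasDerivAt (fun t => φd l t i j) ((V x * φ l x - l • φ l x) i j) x)
    (lam : ℝ)
    (Sx : ℝ → Matrix (Fin N) (Fin N) ℂ)
    (hSx : ∀ (x : ℝ) (i j : Fin N),
      Sx x i j = ∫ t in (0:ℝ)..x, ((φ (lam : ℂ) t)ᴴ * φ (lam : ℂ) t) i j)
    (A : Matrix (Fin N) (Fin N) ℂ) (hA : A.IsHermitian)
    (hdet : ∀ x ∈ Set.Icc (0:ℝ) 1, (1 + Sx x * A).det ≠ 0)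
    (K : ℝ → Matrix (Fin N) (Fin N) ℂ)
    (hK : ∀ x, K x = A * (1 + Sx x * A)⁻¹)
    (W Wd : ℝ → Matrix (Fin N) (Fin N) ℂ)
    (hW : ∀ x, W x = φ (lam : ℂ) x * K x * (φ (lam : ℂ) x)ᴴ)
    (hWd : ∀ x ∈ Set.Icc (0:ℝ) 1, ∀ i j : Fin N,
      HasDerivAt (fun t => W t i j) (Wd x i j) x)
    (Vt : ℝ → Matrix (Fin N) (Fin N) ℂ)
    (hVt : ∀ x, Vt x = V x - 2 • Wd x)
    (T : ℝ → ℂ → Matrix (Fin N) (Fin N) ℂ)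
    (hT : ∀ (x : ℝ) (l : ℂ) (i j : Fin N),
      T x l i j = ∫ t in (0:ℝ)..x, ((φ (lam : ℂ) t)ᴴ * φ l t) i j)
    (η : ℂ → ℝ → Matrix (Fin N) (Fin N) ℂ)
    (hη : ∀ (l : ℂ) (x : ℝ), η l x = φ l x - φ (lam : ℂ) x * K x * T x l) :
    ∀ l : ℂ, η l 0 = 0 ∧
      ∃ ηd : ℝ → Matrix (Fin N) (Fin N) ℂ, ηd 0 = 1 ∧
        (∀ x ∈ Set.Icc (0:ℝ) 1, ∀ i j : Fin N,
          HasDerivAt (fun t => η l t i j) (ηd x i j) x) ∧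
        (∀ x ∈ Set.Icc (0:ℝ) 1, ∀ i j : Fin N,
          HasDerivAt (fun t => ηd t i j) ((Vt x * η l x - l • η l x) i j) x) :=
  stmt14_general V hV φ φd hφ0 hφd0 hde1 hde2 lam Sx hSx A hdet K hK W Wd hW hWd Vt hVt T hT η hη
end
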